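/- arXiv:2307.12615 — 6 statements merged into one kernel-verified Lean document; each statement's English description precedes it below -/
import Mathlib

section
/- For every x ∈ ℝ^d it holds that (1/n) ∑_{i=1}^n ‖∇f_i(x) − ∇f_i(x*)‖² ≤ 2L (f(x) − f(x*)). (This is the conditional expectation E_t‖∇f_{i(t)}(x^{(t)}) − ∇f_{i(t)}(x*)‖² over a uniformly random index i(t) ∈ {1,…,n}.) -/
/-! Each `f i` is cocoercive: for a convex function with `L`-Lipschitz gradient,
`‖∇g y - ∇g x‖² ≤ 2L (g y - g x - ⟪∇g x, y - x⟫)`, because the tilted function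
`g - ⟪∇g x, ·⟫` is minimized at `x` while one gradient step from `y` lowers it by at least
`‖∇g y - ∇g x‖² / (2L)`. Averaging over `i`, the linear terms add up to
`⟪∇F x*, x - x*⟫ = 0`. -/

open scoped RealInnerProductSpace
open InnerProductSpace

section LipschitzGradient

variable {E : Type*} [NormedAddCommGroup E] [InnerProductSpace ℝ E] [CompleteSpace E]
  {g : E → ℝ} {G : E → E} {L : ℝ}

theorem HasGradientAt.hasDerivAt_comp_add_smul {g' x v : E} {t : ℝ}
    (h : HasGradientAt g g' (x + t • v)) :
    HasDerivAt (fun s : ℝ => g (x + s • v)) ⟪g', v⟫ t := by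
  have hline : HasDerivAt (fun s : ℝ => x + s • v) v t := by
    simpa using ((hasDerivAt_id t).smul_const v).const_add x
  simpa [toDual_apply_apply, Function.comp_def] using h.hasFDerivAt.comp_hasDerivAt t hline

theorem ConvexOn.add_inner_le_of_hasGradientAt (hconv : ConvexOn ℝ Set.univ g) {g' x : E}
    (h : HasGradientAt g g' x) (y : E) : g x + ⟪g', y - x⟫ ≤ g y := by
  have hline : ConvexOn ℝ Set.univ (fun t : ℝ => g (x + t • (y - x))) := by
    have hcomp : (fun t : ℝ => g (x + t • (y - x))) = g ∘ AffineMap.lineMap x y := by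
      funext t; simp [AffineMap.lineMap_apply, add_comm]
    rw [hcomp]; simpa using hconv.comp_affineMap _
  have hslope := hline.le_slope_of_hasDerivAt (Set.mem_univ 0) (Set.mem_univ 1) zero_lt_one
    (HasGradientAt.hasDerivAt_comp_add_smul (t := 0) (v := y - x) (by simpa using h))
  simp only [slope_def_field, one_smul, add_sub_cancel, zero_smul, add_zero, sub_zero,
    div_one] at hslope
  linarith

theorem le_add_inner_add_sq_of_lipschitz_gradient (hg : ∀ z, HasGradientAt g (G z) z)
    (hlip : ∀ a b, ‖G a - G b‖ ≤ L * ‖a - b‖) (x y : E) :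
    g y ≤ g x + ⟪G x, y - x⟫ + L / 2 * ‖y - x‖ ^ 2 := by
  set v := y - x
  set φ : ℝ → ℝ := fun t => g (x + t • v) - t * ⟪G x, v⟫ - L / 2 * ‖v‖ ^ 2 * t ^ 2
  have hφ (t : ℝ) :
      HasDerivAt φ (⟪G (x + t • v), v⟫ - ⟪G x, v⟫ - L / 2 * ‖v‖ ^ 2 * (2 * t)) t := by
    have hquad : HasDerivAt (fun s : ℝ => L / 2 * ‖v‖ ^ 2 * s ^ 2) (L / 2 * ‖v‖ ^ 2 * (2 * t)) t := by
      simpa using (hasDerivAt_pow 2 t).const_mul (L / 2 * ‖v‖ ^ 2)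
    exact ((hg _).hasDerivAt_comp_add_smul.sub (hasDerivAt_mul_const _)).sub hquad
  have hanti : AntitoneOn φ (Set.Icc 0 1) := by
    refine antitoneOn_of_hasDerivWithinAt_nonpos (convex_Icc 0 1)
      (fun t _ => (hφ t).continuousAt.continuousWithinAt) (fun t _ => (hφ t).hasDerivWithinAt) ?_
    intro t ht
    rw [interior_Icc] at ht
    have hinc : ⟪G (x + t • v) - G x, v⟫ ≤ L * t * ‖v‖ ^ 2 :=
      calc ⟪G (x + t • v) - G x, v⟫ ≤ ‖G (x + t • v) - G x‖ * ‖v‖ := real_inner_le_norm _ _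
        _ ≤ L * ‖(x + t • v) - x‖ * ‖v‖ := by gcongr; exact hlip _ _
        _ = L * t * ‖v‖ ^ 2 := by
          rw [add_sub_cancel_left, norm_smul, Real.norm_of_nonneg ht.1.le]; ring
    rw [inner_sub_left] at hinc
    linarith
  have h01 := hanti (Set.left_mem_Icc.2 zero_le_one) (Set.right_mem_Icc.2 zero_le_one) zero_le_one
  simp only [φ, v, zero_smul, add_zero, one_smul, add_sub_cancel] at h01
  linarith

/-- Compare `g x` with the value of `g` after the gradient step `y - L⁻¹ • G y`. -/
theorem sq_norm_le_two_mul_sub_of_lipschitz_gradient (hL : 0 < L)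
    (hg : ∀ z, HasGradientAt g (G z) z) (hlip : ∀ a b, ‖G a - G b‖ ≤ L * ‖a - b‖)
    {x : E} (hmin : ∀ z, g x ≤ g z) (y : E) :
    ‖G y‖ ^ 2 ≤ 2 * L * (g y - g x) := by
  have hstep := le_add_inner_add_sq_of_lipschitz_gradient hg hlip y (y - L⁻¹ • G y)
  rw [sub_sub_cancel_left, inner_neg_right, inner_smul_right, real_inner_self_eq_norm_sq,
    norm_neg, norm_smul, Real.norm_of_nonneg (inv_nonneg.2 hL.le)] at hstep
  have hstep_value : L / 2 * (L⁻¹ * ‖G y‖) ^ 2 - L⁻¹ * ‖G y‖ ^ 2 = -(‖G y‖ ^ 2 / (2 * L)) := by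
    field_simp; ring
  have hgain : ‖G y‖ ^ 2 / (2 * L) ≤ g y - g x := by linarith [hmin (y - L⁻¹ • G y)]
  rwa [div_le_iff₀ (by positivity), mul_comm] at hgain

theorem sq_norm_sub_le_of_convexOn_of_lipschitz_gradient (hL : 0 < L)
    (hconv : ConvexOn ℝ Set.univ g) (hg : ∀ z, HasGradientAt g (G z) z)
    (hlip : ∀ a b, ‖G a - G b‖ ≤ L * ‖a - b‖) (x y : E) :
    ‖G y - G x‖ ^ 2 ≤ 2 * L * (g y - g x - ⟪G x, y - x⟫) := by
  have htilt : ∀ z, HasGradientAt (fun w => g w - ⟪G x, w⟫) (G z - G x) z := fun z => by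
    have hderiv := (hg z).hasFDerivAt.fun_sub (toDual ℝ E (G x)).hasFDerivAt
    rw [← map_sub] at hderiv
    simpa [toDual_apply_apply] using hderiv.hasGradientAt
  have hmin : ∀ z, g x - ⟪G x, x⟫ ≤ g z - ⟪G x, z⟫ := fun z => by
    have hsupport := hconv.add_inner_le_of_hasGradientAt (hg x) z
    rw [inner_sub_right] at hsupport
    linarith
  have hgain := sq_norm_le_two_mul_sub_of_lipschitz_gradient hL htilt
    (fun a b => by simpa using hlip a b) hmin y
  rw [inner_sub_right]
  linarith

end LipschitzGradient

theorem stmt_2_general (n d : ℕ) (L : ℝ) (hL : 0 < L)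
    (f : Fin n → EuclideanSpace ℝ (Fin d) → ℝ)
    (hconv : ∀ i, ConvexOn ℝ Set.univ (f i))
    (hdiff : ∀ i, Differentiable ℝ (f i))
    (hsmooth : ∀ i x y, ‖gradient (f i) x - gradient (f i) y‖ ≤ L * ‖x - y‖)
    (F : EuclideanSpace ℝ (Fin d) → ℝ)
    (hF : F = fun x => (n : ℝ)⁻¹ * ∑ i, f i x)
    (xstar : EuclideanSpace ℝ (Fin d)) (hmin : ∀ y, F xstar ≤ F y)
    (x : EuclideanSpace ℝ (Fin d)) :
    (n : ℝ)⁻¹ * ∑ i, ‖gradient (f i) x - gradient (f i) xstar‖ ^ 2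
      ≤ 2 * L * (F x - F xstar) := by
  have hg : ∀ i z, HasGradientAt (f i) (gradient (f i) z) z := fun i z => (hdiff i z).hasGradientAt
  have hcrit : (n : ℝ)⁻¹ * ∑ i, ⟪gradient (f i) xstar, x - xstar⟫ = 0 := by
    have hline : HasDerivAt (fun t : ℝ => F (xstar + t • (x - xstar)))
        ((n : ℝ)⁻¹ * ∑ i, ⟪gradient (f i) xstar, x - xstar⟫) 0 := by
      subst hF
      exact (HasDerivAt.fun_sum fun i _ =>
        HasGradientAt.hasDerivAt_comp_add_smul (t := 0) (by simpa using hg i xstar)).const_mul _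
    exact IsLocalMin.hasDerivAt_eq_zero (Filter.Eventually.of_forall fun t => by simpa using hmin _)
      hline
  calc (n : ℝ)⁻¹ * ∑ i, ‖gradient (f i) x - gradient (f i) xstar‖ ^ 2
      ≤ (n : ℝ)⁻¹ * ∑ i, 2 * L * (f i x - f i xstar - ⟪gradient (f i) xstar, x - xstar⟫) := by
        gcongr with i
        exact sq_norm_sub_le_of_convexOn_of_lipschitz_gradient hL (hconv i) (hg i) (hsmooth i) _ _
    _ = 2 * L * (F x - F xstar) - 2 * L * ((n : ℝ)⁻¹ * ∑ i, ⟪gradient (f i) xstar, x - xstar⟫) := by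
        simp only [hF, ← Finset.mul_sum, Finset.sum_sub_distrib]; ring
    _ = 2 * L * (F x - F xstar) := by rw [hcrit]; ring

theorem stmt_2 (n d : ℕ) (hn : 1 ≤ n) (hd : 1 ≤ d) (L : ℝ) (hL : 0 < L)
    (f : Fin n → EuclideanSpace ℝ (Fin d) → ℝ)
    (hconv : ∀ i, ConvexOn ℝ Set.univ (f i))
    (hdiff : ∀ i, Differentiable ℝ (f i))
    (hsmooth : ∀ i x y, ‖gradient (f i) x - gradient (f i) y‖ ≤ L * ‖x - y‖)
    (F : EuclideanSpace ℝ (Fin d) → ℝ)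
    (hF : F = fun x => (n : ℝ)⁻¹ * ∑ i, f i x)
    (xstar : EuclideanSpace ℝ (Fin d)) (hmin : ∀ y, F xstar ≤ F y)
    (x : EuclideanSpace ℝ (Fin d)) :
    (n : ℝ)⁻¹ * ∑ i, ‖gradient (f i) x - gradient (f i) xstar‖ ^ 2
      ≤ 2 * L * (F x - F xstar) :=
  stmt_2_general n d L hL f hconv hdiff hsmooth F hF xstar hmin x
end

section
/- Let x ∈ ℝ^d and y_1, …, y_n ∈ ℝ^d (the SAGA memory points). Then (1/(2L)) · (1/n) ∑_{i=1}^n ‖∇f_i(y_i) − ∇f_i(x*)‖² ≤ f(x) − f(x*) + ∑_{i=1}^n D_{f_i}(y_i, x*) − [ (1/n) ∑_{i=1}^n D_{f_i}(x, x*) + ((n−1)/n) ∑_{i=1}^n D_{f_i}(y_i, x*) ], where the bracketed term is the expectation of ∑_{i=1}^n D_{f_i}(ỹ_i, x*) when the updated memory ỹ is obtained from y by replacing y_i by x for a uniformly random index i ∈ {1,…,n}. -/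
/-!
Since `x*` minimizes `f`, the gradients `∇f_i(x*)` sum to zero, so `f(x) - f(x*)` is the mean of
the divergences `D_{f_i}(x, x*)` and the right-hand side collapses to the mean of the
`D_{f_i}(y_i, x*)`. Each of these dominates `‖∇f_i(y_i) - ∇f_i(x*)‖² / (2L)`: compare the
first-order lower bound given by convexity with the quadratic upper bound given by `L`-smoothness
at the point reached from `y_i` by a gradient step of size `1/L` for `f_i - ⟨∇f_i(x*), ·⟩`.
-/

/-- Bregman divergence `D_g(y, x) = g(y) − g(x) − ⟨∇g(x), y − x⟩`. -/
noncomputable def bregDiv {d : ℕ} (g : EuclideanSpace ℝ (Fin d) → ℝ)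
    (y x : EuclideanSpace ℝ (Fin d)) : ℝ :=
  g y - g x - @inner ℝ _ _ (gradient g x) (y - x)

open InnerProductSpace Finset AffineMap

section Gradient

variable {E : Type*} [NormedAddCommGroup E] [InnerProductSpace ℝ E] [CompleteSpace E]
  {g : E → ℝ}

theorem HasGradientAt.hasDerivAt_comp_lineMap {g' a b : E} {t : ℝ}
    (h : HasGradientAt g g' (lineMap a b t)) :
    HasDerivAt (fun s : ℝ => g (lineMap a b s)) (inner ℝ g' (b - a)) t := by
  have := h.hasFDerivAt.comp_hasDerivAt t hasDerivAt_lineMap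
  rwa [toDual_apply_apply] at this

theorem ConvexOn.add_inner_gradient_le (hc : ConvexOn ℝ Set.univ g) {a : E}
    (hg : DifferentiableAt ℝ g a) (b : E) :
    g a + inner ℝ (gradient g a) (b - a) ≤ g b := by
  have hφ : ConvexOn ℝ Set.univ (fun s : ℝ => g (lineMap a b s)) :=
    hc.comp_affineMap (lineMap a b)
  have hder : HasDerivAt (fun s : ℝ => g (lineMap a b s)) (inner ℝ (gradient g a) (b - a)) 0 :=
    HasGradientAt.hasDerivAt_comp_lineMap (by simpa using hg.hasGradientAt)
  have := hφ.le_slope_of_hasDerivAt (Set.mem_univ 0) (Set.mem_univ 1) one_pos hder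
  rw [slope_def_field] at this
  simp only [lineMap_apply_zero, lineMap_apply_one, sub_zero, div_one] at this
  linarith

theorem le_add_inner_gradient_add_half_mul_sq_norm {L : ℝ} (hg : Differentiable ℝ g)
    (hs : ∀ u v, ‖gradient g u - gradient g v‖ ≤ L * ‖u - v‖) (a b : E) :
    g b ≤ g a + inner ℝ (gradient g a) (b - a) + L / 2 * ‖b - a‖ ^ 2 := by
  set c := inner ℝ (gradient g a) (b - a)
  set ψ : ℝ → ℝ := fun t => g (lineMap a b t) - t * c - L / 2 * t ^ 2 * ‖b - a‖ ^ 2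
  have hψ : ∀ t, HasDerivAt ψ
      (inner ℝ (gradient g (lineMap a b t)) (b - a) - c - L * t * ‖b - a‖ ^ 2) t := by
    intro t
    have h₁ := (hg (lineMap a b t)).hasGradientAt.hasDerivAt_comp_lineMap
    have h₂ : HasDerivAt (fun s : ℝ => s * c) c t := by
      simpa using (hasDerivAt_id t).mul_const c
    have h₃ : HasDerivAt (fun s : ℝ => L / 2 * s ^ 2 * ‖b - a‖ ^ 2) (L * t * ‖b - a‖ ^ 2) t := by
      refine (((hasDerivAt_pow 2 t).const_mul (L / 2)).mul_const (‖b - a‖ ^ 2)).congr_deriv ?_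
      ring
    exact (h₁.sub h₂).sub h₃
  have hanti : AntitoneOn ψ (Set.Ici 0) := by
    refine antitoneOn_of_hasDerivWithinAt_nonpos (convex_Ici 0)
      (fun t _ => (hψ t).continuousAt.continuousWithinAt)
      (fun t _ => (hψ t).hasDerivWithinAt) fun t ht => ?_
    rw [interior_Ici, Set.mem_Ioi] at ht
    have hbound : inner ℝ (gradient g (lineMap a b t) - gradient g a) (b - a)
        ≤ L * t * ‖b - a‖ ^ 2 :=
      calc _ ≤ ‖gradient g (lineMap a b t) - gradient g a‖ * ‖b - a‖ := real_inner_le_norm _ _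
        _ ≤ L * ‖lineMap a b t - a‖ * ‖b - a‖ := by gcongr; exact hs _ _
        _ = L * t * ‖b - a‖ ^ 2 := by
          rw [← vsub_eq_sub, lineMap_vsub_left, vsub_eq_sub, norm_smul,
            Real.norm_of_nonneg ht.le]
          ring
    rw [inner_sub_left] at hbound
    linarith
  have := hanti (Set.mem_Ici.2 le_rfl) (Set.mem_Ici.2 zero_le_one) zero_le_one
  simp only [ψ, lineMap_apply_zero, lineMap_apply_one] at this
  linarith

theorem ConvexOn.one_div_two_mul_sq_norm_gradient_sub_le (hc : ConvexOn ℝ Set.univ g)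
    (hg : Differentiable ℝ g) {L : ℝ} (hL : 0 < L)
    (hs : ∀ u v, ‖gradient g u - gradient g v‖ ≤ L * ‖u - v‖) (a b : E) :
    1 / (2 * L) * ‖gradient g b - gradient g a‖ ^ 2
      ≤ g b - g a - inner ℝ (gradient g a) (b - a) := by
  set δ := gradient g b - gradient g a
  -- a gradient step from `b` for `g - ⟪∇g a, ·⟫`, which is minimal at `a`
  set w := b - L⁻¹ • δ
  have hbelow := hc.add_inner_gradient_le (hg a) w
  have habove := le_add_inner_gradient_add_half_mul_sq_norm hg hs b w
  have hwb : w - b = -(L⁻¹ • δ) := by simp [w]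
  have hsplit : inner ℝ (gradient g a) (w - a)
      = inner ℝ (gradient g a) (b - a) + inner ℝ (gradient g a) (w - b) := by
    rw [← inner_add_right, sub_add_sub_cancel']
  have hstep : inner ℝ (gradient g b) (w - b)
      = inner ℝ (gradient g a) (w - b) - 2 * (1 / (2 * L) * ‖δ‖ ^ 2) := by
    have hδ : inner ℝ δ (w - b) = -(L⁻¹ * ‖δ‖ ^ 2) := by
      rw [hwb, inner_neg_right, real_inner_smul_right, real_inner_self_eq_norm_sq]
    rw [show gradient g b = gradient g a + δ by simp [δ], inner_add_left, hδ]
    field_simp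
    ring
  have hquad : L / 2 * ‖w - b‖ ^ 2 = 1 / (2 * L) * ‖δ‖ ^ 2 := by
    rw [hwb, norm_neg, norm_smul, Real.norm_of_nonneg (inv_nonneg.2 hL.le)]
    field_simp
  linarith

theorem IsLocalMin.gradient_eq_zero {a : E} (h : IsLocalMin g a) : gradient g a = 0 := by
  rw [← (toDual ℝ E).map_eq_zero_iff, toDual_gradient, h.fderiv_eq_zero]

theorem hasGradientAt_const_mul_sum {ι : Type*} (s : Finset ι) {f : ι → E → ℝ} {x : E}
    (c : ℝ) (hf : ∀ i ∈ s, DifferentiableAt ℝ (f i) x) :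
    HasGradientAt (fun z => c * ∑ i ∈ s, f i z) (c • ∑ i ∈ s, gradient (f i) x) x := by
  rw [hasGradientAt_iff_hasFDerivAt, map_smul, map_sum]
  simp only [toDual_gradient]
  exact (HasFDerivAt.fun_sum fun i hi => (hf i hi).hasFDerivAt).const_mul c

end Gradient

theorem stmt_3_general (n d : ℕ) (hn : 1 ≤ n) (L : ℝ) (hL : 0 < L)
    (f : Fin n → EuclideanSpace ℝ (Fin d) → ℝ)
    (hconv : ∀ i, ConvexOn ℝ Set.univ (f i))
    (hdiff : ∀ i, Differentiable ℝ (f i))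
    (hsmooth : ∀ i x y, ‖gradient (f i) x - gradient (f i) y‖ ≤ L * ‖x - y‖)
    (F : EuclideanSpace ℝ (Fin d) → ℝ)
    (hF : F = fun x => (n : ℝ)⁻¹ * ∑ i, f i x)
    (xstar : EuclideanSpace ℝ (Fin d)) (hmin : ∀ z, F xstar ≤ F z)
    (x : EuclideanSpace ℝ (Fin d)) (y : Fin n → EuclideanSpace ℝ (Fin d)) :
    (1 / (2 * L)) * ((n : ℝ)⁻¹ * ∑ i, ‖gradient (f i) (y i) - gradient (f i) xstar‖ ^ 2)
      ≤ F x - F xstar + ∑ i, bregDiv (f i) (y i) xstar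
        - ((n : ℝ)⁻¹ * ∑ i, bregDiv (f i) x xstar
            + (((n : ℝ) - 1) / n) * ∑ i, bregDiv (f i) (y i) xstar) := by
  have hn₀ : (n : ℝ) ≠ 0 := by positivity
  have hgradF : HasGradientAt F ((n : ℝ)⁻¹ • ∑ i, gradient (f i) xstar) xstar :=
    hF ▸ hasGradientAt_const_mul_sum _ _ fun i _ => hdiff i xstar
  have hsum_grad : ∑ i, gradient (f i) xstar = 0 := by
    have hloc : IsLocalMin F xstar := Filter.Eventually.of_forall hmin
    have h := hloc.gradient_eq_zero
    rw [hgradF.gradient] at h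
    exact (smul_eq_zero.1 h).resolve_left (inv_ne_zero hn₀)
  have hgap : F x - F xstar = (n : ℝ)⁻¹ * ∑ i, bregDiv (f i) x xstar := by
    simp only [hF, bregDiv, sum_sub_distrib, ← sum_inner, hsum_grad, inner_zero_left]
    ring
  calc (1 / (2 * L)) * ((n : ℝ)⁻¹ * ∑ i, ‖gradient (f i) (y i) - gradient (f i) xstar‖ ^ 2)
      = (n : ℝ)⁻¹ * ∑ i, 1 / (2 * L) * ‖gradient (f i) (y i) - gradient (f i) xstar‖ ^ 2 := by
        rw [← mul_sum, mul_left_comm]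
    _ ≤ (n : ℝ)⁻¹ * ∑ i, bregDiv (f i) (y i) xstar := by
        gcongr with i
        exact (hconv i).one_div_two_mul_sq_norm_gradient_sub_le (hdiff i) hL (hsmooth i) _ _
    _ = _ := by
        rw [hgap]
        field_simp
        ring

theorem stmt_3 (n d : ℕ) (hn : 1 ≤ n) (hd : 1 ≤ d) (L : ℝ) (hL : 0 < L)
    (f : Fin n → EuclideanSpace ℝ (Fin d) → ℝ)
    (hconv : ∀ i, ConvexOn ℝ Set.univ (f i))
    (hdiff : ∀ i, Differentiable ℝ (f i))
    (hsmooth : ∀ i x y, ‖gradient (f i) x - gradient (f i) y‖ ≤ L * ‖x - y‖)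
    (F : EuclideanSpace ℝ (Fin d) → ℝ)
    (hF : F = fun x => (n : ℝ)⁻¹ * ∑ i, f i x)
    (xstar : EuclideanSpace ℝ (Fin d)) (hmin : ∀ z, F xstar ≤ F z)
    (x : EuclideanSpace ℝ (Fin d)) (y : Fin n → EuclideanSpace ℝ (Fin d)) :
    (1 / (2 * L)) * ((n : ℝ)⁻¹ * ∑ i, ‖gradient (f i) (y i) - gradient (f i) xstar‖ ^ 2)
      ≤ F x - F xstar + ∑ i, bregDiv (f i) (y i) xstar
        - ((n : ℝ)⁻¹ * ∑ i, bregDiv (f i) x xstar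
            + (((n : ℝ) - 1) / n) * ∑ i, bregDiv (f i) (y i) xstar) :=
  stmt_3_general n d hn L hL f hconv hdiff hsmooth F hF xstar hmin x y
end

section
/- Let T ≥ 1, let g^(1), …, g^(T) ∈ ℝ^d, and for each coordinate k set a_t(k) = √(∑_{s=1}^t (g^(s)(k))²). Then ∑_{t=1}^T ∑_{k=1}^d (g^(t)(k))² / a_t(k) ≤ 2 ∑_{k=1}^d a_T(k), where quotients use the convention x/0 = 0. (That is, ∑_{t=1}^T ‖g^(t)‖²_{A_t⁻¹} ≤ 2 Tr(A_T) for the diagonal AdaGrad matrices A_t = diag(a_t(1),…,a_t(d)) with Moore–Penrose pseudo-inverse A_t⁻¹.) -/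
lemma key_aux (x b : ℝ) (hx : 0 ≤ x) (hb : 0 ≤ b) :
    x / Real.sqrt (b + x) ≤ 2 * (Real.sqrt (b + x) - Real.sqrt b) := by
  rcases eq_or_lt_of_le hx with h | h
  · simp [← h]

  · have hbx : 0 < b + x := by linarith
    have hs : 0 < Real.sqrt (b + x) := Real.sqrt_pos.mpr hbx
    rw [div_le_iff₀ hs]
    have h1 : Real.sqrt (b + x) ^ 2 = b + x := Real.sq_sqrt hbx.le
    have h2 : Real.sqrt b ^ 2 = b := Real.sq_sqrt hb
    have h3 : 0 ≤ Real.sqrt b := Real.sqrt_nonneg b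
    nlinarith [sq_nonneg (Real.sqrt (b + x) - Real.sqrt b), sq_nonneg (2 * Real.sqrt b - Real.sqrt (b + x))]

theorem stmt_11 (d T : ℕ) (hT : 1 ≤ T)
    (g : ℕ → EuclideanSpace ℝ (Fin d))
    (a : ℕ → Fin d → ℝ)
    (ha : ∀ t k, a t k = Real.sqrt (∑ s ∈ Finset.Icc 1 t, (g s k) ^ 2)) :
    ∑ t ∈ Finset.Icc 1 T, ∑ k : Fin d, (g t k) ^ 2 / a t k
      ≤ 2 * ∑ k : Fin d, a T k := by
  rw [Finset.sum_comm, Finset.mul_sum]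
  apply Finset.sum_le_sum
  intro k _
  induction T with
  | zero => simp [ha]
  | succ n ih =>
    rw [Finset.sum_Icc_succ_top (by omega)]
    have hS : ∀ t, (0:ℝ) ≤ ∑ s ∈ Finset.Icc 1 t, (g s k) ^ 2 :=
      fun t => Finset.sum_nonneg fun _ _ => sq_nonneg _
    have hstep : (∑ s ∈ Finset.Icc 1 (n+1), (g s k) ^ 2)
        = (∑ s ∈ Finset.Icc 1 n, (g s k) ^ 2) + (g (n+1) k) ^ 2 :=
      Finset.sum_Icc_succ_top (by omega) _
    have hkey := key_aux ((g (n+1) k)^2) (∑ s ∈ Finset.Icc 1 n, (g s k) ^ 2)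
      (sq_nonneg _) (hS n)
    have hih : ∑ t ∈ Finset.Icc 1 n, (g t k) ^ 2 / a t k ≤ 2 * a n k := by
      rcases Nat.eq_zero_or_pos n with h | h
      · simp [h, ha]

      · exact ih h
    rw [ha (n+1) k, hstep] at *
    rw [ha n k] at hih
    linarith
end

section
/- (AdaGrad-Norm regret bound.) Let X ⊆ ℝ^d be a nonempty compact convex set whose diameter is at most D, let x* ∈ X, let η > 0, and let g^(1), …, g^(T) ∈ ℝ^d. Set A_t = √(∑_{s=1}^t ‖g^(s)‖²), take x^(1) ∈ X, and define the iterates x^(t+1) = Π_X( x^(t) − η A_t⁻¹ g^(t) ) for 1 ≤ t ≤ T, where Π_X is the Euclidean metric projection onto X and A_t⁻¹ uses the convention 0⁻¹ = 0. Then ∑_{t=1}^T ⟨g^(t), x^(t) − x*⟩ ≤ (η + D²/(2η)) √(∑_{t=1}^T ‖g^(t)‖²). -/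
/-!
Each step is a projected gradient step with step size `η / A_t`. Since `x*` lies in `X`, the
projection does not increase the distance to `x*`, which gives
`⟨g_t, x_t - x*⟩ ≤ A_t/(2η) (‖x_t - x*‖² - ‖x_{t+1} - x*‖²) + (η/2) ‖g_t‖² / A_t`.
Summing, the telescoping part is bounded by `A_T D² / (2η)` because `A_t` is nondecreasing and all
distances are at most `D`, and `∑ ‖g_t‖² / A_t ≤ 2 A_T` because `A_t` is the square root of the
partial sums of `‖g_t‖²`.
-/

open Finset

section InnerProductSpace

variable {F : Type*} [NormedAddCommGroup F] [InnerProductSpace ℝ F]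

theorem norm_sub_le_of_forall_norm_sub_le {K : Set F} (hK : Convex ℝ K) {z p y : F}
    (hp : p ∈ K) (hmin : ∀ w ∈ K, ‖p - z‖ ≤ ‖w - z‖) (hy : y ∈ K) :
    ‖p - y‖ ≤ ‖z - y‖ := by
  have : Nonempty K := ⟨⟨p, hp⟩⟩
  have hinf : ‖z - p‖ = ⨅ w : K, ‖z - w‖ :=
    le_antisymm (le_ciInf fun w => by simpa only [norm_sub_rev z] using hmin w w.2)
      (ciInf_le ⟨0, Set.forall_mem_range.2 fun _ => norm_nonneg _⟩ (⟨p, hp⟩ : K))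
  have hobtuse : inner ℝ (z - p) (y - p) ≤ 0 :=
    (norm_eq_iInf_iff_real_inner_le_zero hK hp).1 hinf y hy
  have hexpand : ‖z - y‖ ^ 2 = ‖z - p‖ ^ 2 - 2 * inner ℝ (z - p) (y - p) + ‖p - y‖ ^ 2 := by
    rw [show z - y = (z - p) - (y - p) by abel, norm_sub_sq_real, norm_sub_rev y p]
  exact pow_le_pow_iff_left₀ (norm_nonneg _) (norm_nonneg _) two_ne_zero |>.1 <| by
    nlinarith [sq_nonneg ‖z - p‖]

/-- Under the convention `0⁻¹ = 0` the case `A = 0` is harmless, since `‖g‖ ≤ A` then forces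
`g = 0`. -/
theorem inner_le_of_adagradNorm_step {K : Set F} (hK : Convex ℝ K) {η A : ℝ} (hη : 0 < η)
    {x g p y : F} (hgA : ‖g‖ ≤ A) (hp : p ∈ K)
    (hmin : ∀ w ∈ K, ‖p - (x - (η * A⁻¹) • g)‖ ≤ ‖w - (x - (η * A⁻¹) • g)‖) (hy : y ∈ K) :
    inner ℝ g (x - y) ≤ A / (2 * η) * (‖x - y‖ ^ 2 - ‖p - y‖ ^ 2) + η / 2 * (‖g‖ ^ 2 / A) := by
  rcases (norm_nonneg g).trans hgA |>.eq_or_lt with hA | hA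
  · obtain rfl : g = 0 := norm_le_zero_iff.1 (hA ▸ hgA)
    simp [← hA]
  set s := η * A⁻¹
  have hproj : ‖p - y‖ ^ 2 ≤ ‖(x - y) - s • g‖ ^ 2 := by
    rw [show (x - y) - s • g = (x - s • g) - y by abel]
    exact pow_le_pow_left₀ (norm_nonneg _) (norm_sub_le_of_forall_norm_sub_le hK hp hmin hy) 2
  have hexpand : ‖(x - y) - s • g‖ ^ 2
      = ‖x - y‖ ^ 2 - 2 * s * inner ℝ g (x - y) + s ^ 2 * ‖g‖ ^ 2 := by
    rw [norm_sub_sq_real, real_inner_smul_right, norm_smul, real_inner_comm, mul_pow,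
      Real.norm_eq_abs, sq_abs]
    ring
  have hs : A / (2 * η) * s = 1 / 2 := by simp only [s]; field_simp
  have hs' : A / (2 * η) * s ^ 2 * ‖g‖ ^ 2 = η / 2 * (‖g‖ ^ 2 / A) := by
    simp only [s]; field_simp
  have hscaled := mul_le_mul_of_nonneg_left (hexpand ▸ hproj) (by positivity : 0 ≤ A / (2 * η))
  linear_combination hscaled - 2 * inner ℝ g (x - y) * hs + hs'

end InnerProductSpace

theorem two_sqrt_add_div_sqrt_le {S c : ℝ} (hS : 0 ≤ S) (hc : 0 ≤ c) :
    2 * √S + c / √(S + c) ≤ 2 * √(S + c) := by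
  rcases (add_nonneg hS hc).eq_or_lt with h | h
  · obtain ⟨rfl, rfl⟩ : S = 0 ∧ c = 0 := ⟨by linarith, by linarith⟩
    simp
  have hv : 0 < √(S + c) := Real.sqrt_pos.2 h
  have hc' : c = √(S + c) ^ 2 - √S ^ 2 := by
    rw [Real.sq_sqrt h.le, Real.sq_sqrt hS]; ring
  set u := √S
  set v := √(S + c)
  rw [hc']
  have key : 2 * v - (2 * u + (v ^ 2 - u ^ 2) / v) = (v - u) ^ 2 / v := by
    field_simp; ring
  linarith [div_nonneg (sq_nonneg (v - u)) hv.le]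

theorem monotone_sqrt_sum_Icc {a : ℕ → ℝ} (ha : ∀ t, 0 ≤ a t) :
    Monotone fun t => √(∑ s ∈ Icc 1 t, a s) := fun _ _ hst =>
  Real.sqrt_le_sqrt <| sum_le_sum_of_subset_of_nonneg (Icc_subset_Icc_right hst)
    fun s _ _ => ha s

theorem sum_div_sqrt_sum_Icc_le {a : ℕ → ℝ} (ha : ∀ t, 0 ≤ a t) (n : ℕ) :
    ∑ t ∈ Icc 1 n, a t / √(∑ s ∈ Icc 1 t, a s) ≤ 2 * √(∑ s ∈ Icc 1 n, a s) := by
  induction n with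
  | zero => simp
  | succ n ih =>
    rw [sum_Icc_succ_top (Nat.le_add_left 1 n), sum_Icc_succ_top (Nat.le_add_left 1 n)]
    linarith [two_sqrt_add_div_sqrt_le (sum_nonneg fun s (_ : s ∈ Icc 1 n) => ha s) (ha (n + 1))]

theorem sum_mul_sub_succ_le {A r : ℕ → ℝ} {R : ℝ} (hA : Monotone A) (hA0 : ∀ t, 0 ≤ A t)
    {n : ℕ} (hr : ∀ t ∈ Icc 1 (n + 1), 0 ≤ r t ∧ r t ≤ R) :
    ∑ t ∈ Icc 1 n, A t * (r t - r (t + 1)) ≤ A n * R := by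
  suffices h : ∀ m ≤ n, ∑ t ∈ Icc 1 m, A t * (r t - r (t + 1)) ≤ A m * (R - r (m + 1)) by
    nlinarith [h n le_rfl, hA0 n, (hr (n + 1) (by simp)).1]
  intro m hm
  induction m with
  | zero => simpa using mul_nonneg (hA0 0) (sub_nonneg.2 (hr 1 (by simp)).2)
  | succ m ih =>
    rw [sum_Icc_succ_top (Nat.le_add_left 1 m)]
    have hrR := (hr (m + 1) (mem_Icc.2 ⟨by omega, by omega⟩)).2
    nlinarith [ih (by omega), hA m.le_succ]

theorem stmt_13_general (d T : ℕ) (D η : ℝ) (hη : 0 < η)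
    (X : Set (EuclideanSpace ℝ (Fin d)))
    (hXconv : Convex ℝ X)
    (hdiam : ∀ x ∈ X, ∀ y ∈ X, ‖x - y‖ ≤ D)
    (xstar : EuclideanSpace ℝ (Fin d)) (hxstar : xstar ∈ X)
    (g : ℕ → EuclideanSpace ℝ (Fin d))
    (A : ℕ → ℝ) (hA : ∀ t, A t = Real.sqrt (∑ s ∈ Finset.Icc 1 t, ‖g s‖ ^ 2))
    (x : ℕ → EuclideanSpace ℝ (Fin d)) (hx1 : x 1 ∈ X)
    (hproj : ∀ t ∈ Finset.Icc 1 T, x (t + 1) ∈ X ∧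
        ∀ y ∈ X, ‖x (t + 1) - (x t - (η * (A t)⁻¹) • g t)‖
          ≤ ‖y - (x t - (η * (A t)⁻¹) • g t)‖) :
    ∑ t ∈ Finset.Icc 1 T, (inner ℝ (g t) (x t - xstar) : ℝ)
      ≤ (η + D ^ 2 / (2 * η)) * Real.sqrt (∑ t ∈ Finset.Icc 1 T, ‖g t‖ ^ 2) := by
  have hmem : ∀ t ∈ Icc 1 (T + 1), x t ∈ X := by
    intro t ht
    obtain ⟨n, rfl⟩ : ∃ n, t = n + 1 := ⟨t - 1, by grind⟩
    rcases n.eq_zero_or_pos with rfl | hn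
    · exact hx1
    · exact (hproj n (mem_Icc.2 ⟨hn, by grind⟩)).1
  have hA0 : ∀ t, 0 ≤ A t := fun t => hA t ▸ Real.sqrt_nonneg _
  have hAmono : Monotone A := by
    simpa only [← hA] using monotone_sqrt_sum_Icc fun t => sq_nonneg ‖g t‖
  have hgA : ∀ t ∈ Icc 1 T, ‖g t‖ ≤ A t := fun t ht => by
    rw [hA, ← Real.sqrt_sq (norm_nonneg (g t))]
    exact Real.sqrt_le_sqrt <| single_le_sum (fun s _ => sq_nonneg ‖g s‖)
      (mem_Icc.2 ⟨(mem_Icc.1 ht).1, le_rfl⟩)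
  have hstep : ∀ t ∈ Icc 1 T, inner ℝ (g t) (x t - xstar)
      ≤ A t / (2 * η) * (‖x t - xstar‖ ^ 2 - ‖x (t + 1) - xstar‖ ^ 2)
        + η / 2 * (‖g t‖ ^ 2 / A t) := fun t ht =>
    inner_le_of_adagradNorm_step hXconv hη (hgA t ht) (hproj t ht).1 (hproj t ht).2 hxstar
  calc ∑ t ∈ Icc 1 T, inner ℝ (g t) (x t - xstar)
      ≤ ∑ t ∈ Icc 1 T, (A t / (2 * η) * (‖x t - xstar‖ ^ 2 - ‖x (t + 1) - xstar‖ ^ 2)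
        + η / 2 * (‖g t‖ ^ 2 / A t)) := sum_le_sum hstep
    _ = (∑ t ∈ Icc 1 T, A t * (‖x t - xstar‖ ^ 2 - ‖x (t + 1) - xstar‖ ^ 2)) / (2 * η)
        + η / 2 * ∑ t ∈ Icc 1 T, ‖g t‖ ^ 2 / A t := by
      rw [sum_add_distrib, ← mul_sum, sum_div]
      congr 1
      exact sum_congr rfl fun t _ => by ring
    _ ≤ A T * D ^ 2 / (2 * η) + η / 2 * (2 * A T) := by
      gcongr ?_ / _ + _ * ?_
      · exact sum_mul_sub_succ_le hAmono hA0 fun t ht =>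
          ⟨sq_nonneg _, pow_le_pow_left₀ (norm_nonneg _) (hdiam _ (hmem t ht) _ hxstar) 2⟩
      · simpa only [hA] using sum_div_sqrt_sum_Icc_le (fun t => sq_nonneg ‖g t‖) T
    _ = (η + D ^ 2 / (2 * η)) * Real.sqrt (∑ t ∈ Finset.Icc 1 T, ‖g t‖ ^ 2) := by
      rw [hA T]
      field_simp
      ring

theorem stmt_13 (d T : ℕ) (hT : 1 ≤ T) (D η : ℝ) (hη : 0 < η)
    (X : Set (EuclideanSpace ℝ (Fin d))) (hXne : X.Nonempty)
    (hXcomp : IsCompact X) (hXconv : Convex ℝ X)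
    (hdiam : ∀ x ∈ X, ∀ y ∈ X, ‖x - y‖ ≤ D)
    (xstar : EuclideanSpace ℝ (Fin d)) (hxstar : xstar ∈ X)
    (g : ℕ → EuclideanSpace ℝ (Fin d))
    (A : ℕ → ℝ) (hA : ∀ t, A t = Real.sqrt (∑ s ∈ Finset.Icc 1 t, ‖g s‖ ^ 2))
    (x : ℕ → EuclideanSpace ℝ (Fin d)) (hx1 : x 1 ∈ X)
    (hproj : ∀ t ∈ Finset.Icc 1 T, x (t + 1) ∈ X ∧
        ∀ y ∈ X, ‖x (t + 1) - (x t - (η * (A t)⁻¹) • g t)‖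
          ≤ ‖y - (x t - (η * (A t)⁻¹) • g t)‖) :
    ∑ t ∈ Finset.Icc 1 T, (inner ℝ (g t) (x t - xstar) : ℝ)
      ≤ (η + D ^ 2 / (2 * η)) * Real.sqrt (∑ t ∈ Finset.Icc 1 T, ‖g t‖ ^ 2) :=
  stmt_13_general d T D η hη X hXconv hdiam xstar hxstar g A hA x hx1 hproj
end

section
/- (AdaGrad-Diagonal regret bound.) Let X ⊆ ℝ^d be a nonempty compact convex set whose diameter is at most D, let x* ∈ X, let η > 0, and let g^(1), …, g^(T) ∈ ℝ^d. For each coordinate k set a_t(k) = √(∑_{s=1}^t (g^(s)(k))²), and for a vector v define ‖v‖²_{A_t} = ∑_{k=1}^d a_t(k) v(k)². Suppose x^(1) ∈ X and x^(2), …, x^(T) ∈ X satisfy, for every 1 ≤ t ≤ T−1, ‖x^(t+1) − x*‖_{A_t} ≤ ‖z^(t) − x*‖_{A_t}, where z^(t) ∈ ℝ^d is defined coordinatewise by z^(t)(k) = x^(t)(k) − η g^(t)(k)/a_t(k) (with x/0 = 0); this holds in particular when x^(t+1) is the projection of z^(t) onto X in the ‖·‖_{A_t} norm. Then ∑_{t=1}^T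 ⟨g^(t), x^(t) − x*⟩ ≤ √d (η + D²/(2η)) √(∑_{t=1}^T ‖g^(t)‖²). -/
/-!
Write `S t = ‖x_t - x*‖²_{A_t}`. Expanding the square in the step condition gives
`2η ⟪g_t, x_t - x*⟫ ≤ S t - ‖x_{t+1} - x*‖²_{A_t} + η² ∑_k g_t(k)² / a_t(k)`, and since the
weights only grow and every coordinate of `x_{t+1} - x*` is at most `D` in absolute value, passing
from `A_t` to `A_{t+1}` costs at most `D² tr (A_{t+1} - A_t)`. Summing over `t`, the distances
telescope to at most `D² tr A_T`, while the AdaGrad estimate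
`∑_t b_t / √(b_1 + ⋯ + b_t) ≤ 2 √(b_1 + ⋯ + b_T)`, applied coordinatewise, bounds the gradient
terms by `2 tr A_T`. So `2η · regret ≤ (D² + 2η²) tr A_T`, and Cauchy–Schwarz gives
`tr A_T ≤ √d · √(∑_t ‖g_t‖²)`.
-/

open Finset

theorem sum_Icc_le_of_le_sub_succ {u Φ : ℕ → ℝ} {n : ℕ} (hn : 1 ≤ n)
    (hstep : ∀ t ∈ Ico 1 n, u t ≤ Φ t - Φ (t + 1)) (hlast : u n ≤ Φ n) :
    ∑ t ∈ Icc 1 n, u t ≤ Φ 1 := by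
  have htelescope : ∑ t ∈ Ico 1 n, u t ≤ Φ 1 - Φ n :=
    calc ∑ t ∈ Ico 1 n, u t ≤ ∑ t ∈ Ico 1 n, -(Φ (t + 1) - Φ t) := by
          refine sum_le_sum fun t ht => ?_
          linarith [hstep t ht]
      _ = Φ 1 - Φ n := by rw [sum_neg_distrib, sum_Ico_sub Φ hn, neg_sub]
  rw [← Ico_add_one_right_eq_Icc, sum_Ico_succ_top hn]
  linarith

theorem div_sqrt_add_le_two_mul_sqrt_sub {S b : ℝ} (hS : 0 ≤ S) (hb : 0 ≤ b) :
    b / √(S + b) ≤ 2 * (√(S + b) - √S) := by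
  have hmono : √S ≤ √(S + b) := Real.sqrt_le_sqrt (by linarith)
  rcases (Real.sqrt_nonneg (S + b)).eq_or_lt with hzero | hpos
  · rw [← hzero, div_zero]
    linarith [Real.sqrt_nonneg S]
  · have hsq : √(S + b) ^ 2 - √S ^ 2 = b := by
      rw [Real.sq_sqrt hS, Real.sq_sqrt (by linarith)]
      ring
    rw [div_le_iff₀ hpos]
    nlinarith

theorem sum_div_sqrt_partialSum_le {b : ℕ → ℝ} (hb : ∀ t, 0 ≤ b t) (n : ℕ) :
    ∑ t ∈ Icc 1 n, b t / √(∑ s ∈ Icc 1 t, b s) ≤ 2 * √(∑ s ∈ Icc 1 n, b s) := by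
  induction n with
  | zero => simp
  | succ n ih =>
    rw [sum_Icc_succ_top (by omega), sum_Icc_succ_top (by omega)]
    have := div_sqrt_add_le_two_mul_sqrt_sub (sum_nonneg fun s (_ : s ∈ Icc 1 n) => hb s)
      (hb (n + 1))
    linarith

section WeightedNorm

variable {ι : Type*} [Fintype ι]

def weightedNormSq (w v : ι → ℝ) : ℝ := ∑ k, w k * v k ^ 2

theorem weightedNormSq_nonneg {w : ι → ℝ} (hw : ∀ k, 0 ≤ w k) (v : ι → ℝ) :
    0 ≤ weightedNormSq w v :=
  sum_nonneg fun k _ => mul_nonneg (hw k) (sq_nonneg _)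

theorem weightedNormSq_sub_weightedNormSq (w w' v : ι → ℝ) :
    weightedNormSq w' v - weightedNormSq w v = weightedNormSq (w' - w) v := by
  simp only [weightedNormSq, ← sum_sub_distrib, Pi.sub_apply, sub_mul]

theorem weightedNormSq_le {w v : ι → ℝ} {C : ℝ} (hw : ∀ k, 0 ≤ w k) (hv : ∀ k, v k ^ 2 ≤ C) :
    weightedNormSq w v ≤ C * ∑ k, w k := by
  rw [mul_sum]
  exact sum_le_sum fun k _ => by nlinarith [hw k, hv k]

theorem weightedNormSq_sub_div_eq {w g y : ι → ℝ} (hw : ∀ k, w k = 0 → g k = 0) (η : ℝ) :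
    weightedNormSq w (fun k => y k - η * g k / w k)
      = weightedNormSq w y - 2 * η * ∑ k, g k * y k + η ^ 2 * ∑ k, g k ^ 2 / w k := by
  simp only [weightedNormSq, mul_sum, ← sum_sub_distrib, ← sum_add_distrib]
  refine sum_congr rfl fun k _ => ?_
  by_cases hk : w k = 0
  · simp [hk, hw k hk]
  · field_simp
    ring

end WeightedNorm

section AdaGrad

variable {ι : Type*}

theorem EuclideanSpace.apply_sq_le_sq_of_norm_le [Fintype ι] {v : EuclideanSpace ℝ ι} {D : ℝ}
    (h : ‖v‖ ≤ D) (k : ι) : v k ^ 2 ≤ D ^ 2 := by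
  rw [← sq_abs, ← Real.norm_eq_abs]
  exact pow_le_pow_left₀ (norm_nonneg _) ((PiLp.norm_apply_le v k).trans h) 2

theorem EuclideanSpace.real_inner_eq_sum [Fintype ι] (u v : EuclideanSpace ℝ ι) :
    inner ℝ u v = ∑ k, u k * v k := by
  simp [PiLp.inner_apply, mul_comm]

noncomputable def adagradWeight (g : ℕ → EuclideanSpace ℝ ι) (t : ℕ) (k : ι) : ℝ :=
  √(∑ s ∈ Icc 1 t, g s k ^ 2)

variable {g : ℕ → EuclideanSpace ℝ ι}

theorem adagradWeight_nonneg (t : ℕ) (k : ι) : 0 ≤ adagradWeight g t k :=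
  Real.sqrt_nonneg _

theorem adagradWeight_mono (k : ι) : Monotone fun t => adagradWeight g t k :=
  fun _ _ hst => Real.sqrt_le_sqrt <|
    sum_le_sum_of_subset_of_nonneg (Icc_subset_Icc_right hst) fun _ _ _ => sq_nonneg _

theorem eq_zero_of_adagradWeight_eq_zero {t : ℕ} (ht : 1 ≤ t) {k : ι}
    (h : adagradWeight g t k = 0) : g t k = 0 := by
  rw [adagradWeight, Real.sqrt_eq_zero (sum_nonneg fun _ _ => sq_nonneg _),
    sum_eq_zero_iff_of_nonneg fun _ _ => sq_nonneg _] at h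
  exact pow_eq_zero_iff two_ne_zero |>.mp (h t (mem_Icc.mpr ⟨ht, le_rfl⟩))

theorem sum_sum_sq_div_adagradWeight_le [Fintype ι] (T : ℕ) :
    ∑ t ∈ Icc 1 T, ∑ k, g t k ^ 2 / adagradWeight g t k ≤ 2 * ∑ k, adagradWeight g T k := by
  rw [sum_comm, mul_sum]
  exact sum_le_sum fun k _ => sum_div_sqrt_partialSum_le (fun s => sq_nonneg (g s k)) T

theorem sum_adagradWeight_le [Fintype ι] (T : ℕ) :
    ∑ k, adagradWeight g T k ≤ √(Fintype.card ι) * √(∑ t ∈ Icc 1 T, ‖g t‖ ^ 2) := by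
  have hcs := Real.sum_sqrt_mul_sqrt_le univ (fun _ => zero_le_one)
    (fun k => sum_nonneg fun s (_ : s ∈ Icc 1 T) => sq_nonneg (g s k))
  simp only [Real.sqrt_one, one_mul, sum_const, card_univ, nsmul_eq_mul, mul_one] at hcs
  rwa [sum_comm, sum_congr rfl fun t _ => (EuclideanSpace.real_norm_sq_eq (g t)).symm] at hcs

theorem two_mul_sum_inner_le_adagradWeight [Fintype ι]
    {x : ℕ → EuclideanSpace ℝ ι} {xstar : EuclideanSpace ℝ ι} {T : ℕ} {η D : ℝ} (hT : 1 ≤ T)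
    (hD : ∀ t ∈ Icc 1 T, ‖x t - xstar‖ ≤ D)
    (hstep : ∀ t ∈ Ico 1 T,
      weightedNormSq (adagradWeight g t) (fun k => x (t + 1) k - xstar k)
        ≤ weightedNormSq (adagradWeight g t)
            (fun k => x t k - η * g t k / adagradWeight g t k - xstar k)) :
    2 * η * ∑ t ∈ Icc 1 T, inner ℝ (g t) (x t - xstar)
      ≤ (D ^ 2 + 2 * η ^ 2) * ∑ k, adagradWeight g T k := by
  set a := adagradWeight g
  set S : ℕ → ℝ := fun t => weightedNormSq (a t) (fun k => x t k - xstar k)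
  set Q : ℕ → ℝ := fun t => ∑ k, g t k ^ 2 / a t k
  set A : ℕ → ℝ := fun t => ∑ k, a t k
  have hcoord : ∀ t ∈ Icc 1 T, ∀ k, (x t k - xstar k) ^ 2 ≤ D ^ 2 := fun t ht =>
    EuclideanSpace.apply_sq_le_sq_of_norm_le (hD t ht)
  have hexpand : ∀ t ∈ Icc 1 T,
      weightedNormSq (a t) (fun k => x t k - η * g t k / a t k - xstar k)
        = S t - 2 * η * inner ℝ (g t) (x t - xstar) + η ^ 2 * Q t := by
    intro t ht
    have h := weightedNormSq_sub_div_eq (w := a t) (g := fun k => g t k)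
      (y := fun k => x t k - xstar k)
      (fun k => eq_zero_of_adagradWeight_eq_zero (mem_Icc.mp ht).1) η
    rw [funext fun k => sub_right_comm (x t k) (η * g t k / a t k) (xstar k), h,
      EuclideanSpace.real_inner_eq_sum]
    rfl
  have hreweight : ∀ t ∈ Ico 1 T,
      S (t + 1) - weightedNormSq (a t) (fun k => x (t + 1) k - xstar k)
        ≤ D ^ 2 * (A (t + 1) - A t) := by
    intro t ht
    rw [weightedNormSq_sub_weightedNormSq, ← sum_sub_distrib]
    exact weightedNormSq_le (fun k => sub_nonneg.mpr (adagradWeight_mono k t.le_succ))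
      (hcoord (t + 1) (by simp at ht ⊢; omega))
  have hS₁ : S 1 ≤ D ^ 2 * A 1 :=
    weightedNormSq_le (adagradWeight_nonneg 1) (hcoord 1 (by simpa using hT))
  have hregret : ∑ t ∈ Icc 1 T, (2 * η * inner ℝ (g t) (x t - xstar) - η ^ 2 * Q t)
      ≤ S 1 + D ^ 2 * (A T - A 1) := by
    refine sum_Icc_le_of_le_sub_succ (Φ := fun t => S t + D ^ 2 * (A T - A t)) hT
      (fun t ht => ?_) ?_
    · have := hexpand t (Ico_subset_Icc_self ht)
      linarith [hstep t ht, hreweight t ht]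
    · have := hexpand T (by simpa using hT)
      linarith [weightedNormSq_nonneg (adagradWeight_nonneg (g := g) T)
        (fun k => x T k - η * g T k / a T k - xstar k)]
  rw [sum_sub_distrib, ← mul_sum, ← mul_sum] at hregret
  have hgrad := mul_le_mul_of_nonneg_left (sum_sum_sq_div_adagradWeight_le (g := g) T)
    (sq_nonneg η)
  linarith

end AdaGrad

theorem stmt_14_general (d T : ℕ) (hT : 1 ≤ T) (D η : ℝ) (hη : 0 < η)
    (X : Set (EuclideanSpace ℝ (Fin d)))
    (hdiam : ∀ x ∈ X, ∀ y ∈ X, ‖x - y‖ ≤ D)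
    (xstar : EuclideanSpace ℝ (Fin d)) (hxstar : xstar ∈ X)
    (g : ℕ → EuclideanSpace ℝ (Fin d))
    (a : ℕ → Fin d → ℝ)
    (ha : ∀ t k, a t k = Real.sqrt (∑ s ∈ Finset.Icc 1 t, (g s k) ^ 2))
    (x : ℕ → EuclideanSpace ℝ (Fin d))
    (hxX : ∀ t ∈ Finset.Icc 1 T, x t ∈ X)
    (hstep : ∀ t ∈ Finset.Icc 1 (T - 1),
        Real.sqrt (∑ k : Fin d, a t k * (x (t + 1) k - xstar k) ^ 2)
          ≤ Real.sqrt (∑ k : Fin d,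
              a t k * ((x t k - η * g t k / a t k) - xstar k) ^ 2)) :
    ∑ t ∈ Finset.Icc 1 T, (inner ℝ (g t) (x t - xstar) : ℝ)
      ≤ Real.sqrt d * (η + D ^ 2 / (2 * η))
          * Real.sqrt (∑ t ∈ Finset.Icc 1 T, ‖g t‖ ^ 2) := by
  obtain rfl : a = adagradWeight g := funext fun t => funext (ha t)
  have hregret := two_mul_sum_inner_le_adagradWeight (xstar := xstar) (η := η) hT
    (fun t ht => hdiam _ (hxX t ht) _ hxstar) fun t ht =>
      (Real.sqrt_le_sqrt_iff (weightedNormSq_nonneg (adagradWeight_nonneg t) _)).mp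
        (hstep t (by simp at ht ⊢; omega))
  have hweights := sum_adagradWeight_le (g := g) T
  rw [Fintype.card_fin] at hweights
  calc ∑ t ∈ Icc 1 T, inner ℝ (g t) (x t - xstar)
      ≤ (η + D ^ 2 / (2 * η)) * ∑ k, adagradWeight g T k := by
        rw [show η + D ^ 2 / (2 * η) = (D ^ 2 + 2 * η ^ 2) / (2 * η) by field_simp; ring,
          div_mul_eq_mul_div, le_div_iff₀ (by positivity)]
        linarith
    _ ≤ (η + D ^ 2 / (2 * η)) * (√d * √(∑ t ∈ Icc 1 T, ‖g t‖ ^ 2)) := by gcongr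
    _ = √d * (η + D ^ 2 / (2 * η)) * √(∑ t ∈ Icc 1 T, ‖g t‖ ^ 2) := by ring

theorem stmt_14 (d T : ℕ) (hT : 1 ≤ T) (D η : ℝ) (hη : 0 < η)
    (X : Set (EuclideanSpace ℝ (Fin d))) (hXne : X.Nonempty)
    (hXcomp : IsCompact X) (hXconv : Convex ℝ X)
    (hdiam : ∀ x ∈ X, ∀ y ∈ X, ‖x - y‖ ≤ D)
    (xstar : EuclideanSpace ℝ (Fin d)) (hxstar : xstar ∈ X)
    (g : ℕ → EuclideanSpace ℝ (Fin d))
    (a : ℕ → Fin d → ℝ)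
    (ha : ∀ t k, a t k = Real.sqrt (∑ s ∈ Finset.Icc 1 t, (g s k) ^ 2))
    (x : ℕ → EuclideanSpace ℝ (Fin d))
    (hxX : ∀ t ∈ Finset.Icc 1 T, x t ∈ X)
    (hstep : ∀ t ∈ Finset.Icc 1 (T - 1),
        Real.sqrt (∑ k : Fin d, a t k * (x (t + 1) k - xstar k) ^ 2)
          ≤ Real.sqrt (∑ k : Fin d,
              a t k * ((x t k - η * g t k / a t k) - xstar k) ^ 2)) :
    ∑ t ∈ Finset.Icc 1 T, (inner ℝ (g t) (x t - xstar) : ℝ)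
      ≤ Real.sqrt d * (η + D ^ 2 / (2 * η))
          * Real.sqrt (∑ t ∈ Finset.Icc 1 T, ‖g t‖ ^ 2) :=
  stmt_14_general d T hT D η hη X hdiam xstar hxstar g a ha x hxX hstep
end

section
/- (One-step estimator bound, SAGA.) Let x ∈ ℝ^d and y_1, …, y_n ∈ ℝ^d, and set ḡ = (1/n) ∑_{j=1}^n ∇f_j(y_j). Then (1/n) ∑_{i=1}^n ‖∇f_i(x) − ∇f_i(y_i) + ḡ‖² ≤ 8L (f(x) − f(x*)) + 4L ( ∑_{i=1}^n D_{f_i}(y_i, x*) − [ (1/n) ∑_{i=1}^n D_{f_i}(x, x*) + ((n−1)/n) ∑_{i=1}^n D_{f_i}(y_i, x*) ] ), where the bracketed term is the expectation of ∑_{i=1}^n D_{f_i}(ỹ_i, x*) when the updated memory ỹ is obtained from y by replacing y_i by x for a uniformly random index i ∈ {1,…,n}. -/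
open InnerProductSpace Set
open scoped RealInnerProductSpace Gradient

section Gradient

variable {E : Type*} [NormedAddCommGroup E] [InnerProductSpace ℝ E] [CompleteSpace E]
  {f : E → ℝ} {L : ℝ}

theorem IsLocalMin.hasGradientAt_eq_zero {g : E} {x : E} (hmin : IsLocalMin f x)
    (hg : HasGradientAt f g x) : g = 0 :=
  (toDual ℝ E).map_eq_zero_iff.mp (hmin.hasFDerivAt_eq_zero hg.hasFDerivAt)

theorem hasGradientAt_inner_left (c z : E) : HasGradientAt (fun w => ⟪c, w⟫) c z :=
  hasGradientAt_iff_hasFDerivAt.mpr (toDual ℝ E c).hasFDerivAt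

theorem hasGradientAt_mul_sum {ι : Type*} [Fintype ι] {f : ι → E → ℝ}
    (hf : ∀ i, Differentiable ℝ (f i)) (c : ℝ) (x : E) :
    HasGradientAt (fun z => c * ∑ i, f i z) (c • ∑ i, ∇ (f i) x) x := by
  rw [hasGradientAt_iff_hasFDerivAt, map_smul, map_sum]
  simp only [toDual_gradient]
  exact (HasFDerivAt.fun_sum fun i _ => (hf i x).hasFDerivAt).const_mul c

theorem hasDerivAt_comp_add_smul (hf : Differentiable ℝ f) (u v : E) (t : ℝ) :
    HasDerivAt (fun s : ℝ => f (u + s • v)) ⟪∇ f (u + t • v), v⟫ t := by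
  have hline : HasDerivAt (fun s : ℝ => u + s • v) v t := by
    simpa using ((hasDerivAt_id t).smul_const v).const_add u
  rw [inner_gradient_left]
  exact (hf _).hasFDerivAt.comp_hasDerivAt t hline

theorem ConvexOn.add_inner_gradient_le_s16 (hconv : ConvexOn ℝ univ f) (hf : Differentiable ℝ f)
    (u z : E) : f u + ⟪∇ f u, z - u⟫ ≤ f z := by
  have hρ : ConvexOn ℝ univ fun t : ℝ => f (u + t • (z - u)) := by
    simpa [Function.comp_def, AffineMap.lineMap_apply_module', add_comm]
      using hconv.comp_affineMap (AffineMap.lineMap u z)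
  have hd := (hasDerivAt_comp_add_smul hf u (z - u) 0).hasDerivWithinAt (s := univ)
  rw [zero_smul, add_zero] at hd
  have hslope := hρ.le_slope_of_hasDerivWithinAt (mem_univ 0) (mem_univ 1) zero_lt_one hd
  simp only [slope_def_field, one_smul, zero_smul, add_zero, sub_zero, div_one,
    add_sub_cancel] at hslope
  linarith

theorem le_add_inner_gradient_add_sq (hf : Differentiable ℝ f)
    (hs : ∀ a b, ‖∇ f a - ∇ f b‖ ≤ L * ‖a - b‖) (u w : E) :
    f w ≤ f u + ⟪∇ f u, w - u⟫ + L / 2 * ‖w - u‖ ^ 2 := by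
  set v := w - u
  set ψ : ℝ → ℝ := fun t => f (u + t • v) - t * ⟪∇ f u, v⟫ - L / 2 * t ^ 2 * ‖v‖ ^ 2
  have hψ : ∀ t : ℝ, HasDerivAt ψ (⟪∇ f (u + t • v) - ∇ f u, v⟫ - L * t * ‖v‖ ^ 2) t := by
    intro t
    have h := ((hasDerivAt_comp_add_smul hf u v t).sub
      ((hasDerivAt_id t).mul_const ⟪∇ f u, v⟫)).sub
      (((hasDerivAt_pow 2 t).const_mul (L / 2)).mul_const (‖v‖ ^ 2))
    refine h.congr_deriv ?_
    rw [inner_sub_left]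
    ring
  have hanti : AntitoneOn ψ (Icc 0 1) := by
    refine antitoneOn_of_hasDerivWithinAt_nonpos (convex_Icc 0 1)
      (fun t _ => (hψ t).continuousAt.continuousWithinAt) (fun t _ => (hψ t).hasDerivWithinAt) ?_
    intro t ht
    rw [interior_Icc] at ht
    have hlip : ‖∇ f (u + t • v) - ∇ f u‖ ≤ L * t * ‖v‖ := by
      simpa [norm_smul, abs_of_pos ht.1, mul_assoc] using hs (u + t • v) u
    have := (real_inner_le_norm _ v).trans (mul_le_mul_of_nonneg_right hlip (norm_nonneg v))
    nlinarith
  have h01 := hanti (left_mem_Icc.2 zero_le_one) (right_mem_Icc.2 zero_le_one) zero_le_one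
  simp only [ψ, v, one_smul, zero_smul, add_zero, add_sub_cancel] at h01
  linarith

/-- Minimising the descent bound over a gradient step of length `1 / L`. -/
theorem sq_norm_gradient_le (hf : Differentiable ℝ f) (hL : 0 < L)
    (hs : ∀ a b, ‖∇ f a - ∇ f b‖ ≤ L * ‖a - b‖) {w : E} (hmin : ∀ z, f w ≤ f z) (u : E) :
    ‖∇ f u‖ ^ 2 ≤ 2 * L * (f u - f w) := by
  set g := ∇ f u
  have hstep := le_add_inner_gradient_add_sq hf hs u (u - L⁻¹ • g)
  have hinner : ⟪g, u - L⁻¹ • g - u⟫ = -(L⁻¹ * ‖g‖ ^ 2) := by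
    rw [sub_sub_cancel_left, inner_neg_right, real_inner_smul_right, real_inner_self_eq_norm_sq]
  have hnorm : ‖u - L⁻¹ • g - u‖ ^ 2 = L⁻¹ ^ 2 * ‖g‖ ^ 2 := by
    rw [sub_sub_cancel_left, norm_neg, norm_smul, mul_pow, Real.norm_eq_abs, sq_abs]
  rw [hinner, hnorm] at hstep
  have hval : f u + -(L⁻¹ * ‖g‖ ^ 2) + L / 2 * (L⁻¹ ^ 2 * ‖g‖ ^ 2)
      = f u - ‖g‖ ^ 2 / (2 * L) := by
    field_simp
    ring
  have hle := hmin (u - L⁻¹ • g)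
  have hdiv : ‖g‖ ^ 2 / (2 * L) ≤ f u - f w := by linarith
  rwa [div_le_iff₀ (by positivity), mul_comm] at hdiv

/-- Co-coercivity of the gradient: `f - ⟪∇ f v, ·⟫` is convex, `L`-smooth and minimal at `v`. -/
theorem sq_norm_gradient_sub_le (hconv : ConvexOn ℝ univ f) (hf : Differentiable ℝ f)
    (hL : 0 < L) (hs : ∀ a b, ‖∇ f a - ∇ f b‖ ≤ L * ‖a - b‖) (u v : E) :
    ‖∇ f u - ∇ f v‖ ^ 2 ≤ 2 * L * (f u - f v - ⟪∇ f v, u - v⟫) := by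
  set c := ∇ f v
  set φ : E → ℝ := f - fun z => ⟪c, z⟫
  have hφ : ∀ z, HasGradientAt φ (∇ f z - c) z := fun z => by
    rw [hasGradientAt_iff_hasFDerivAt, map_sub]
    exact (hf z).hasGradientAt.hasFDerivAt.sub (hasGradientAt_inner_left c z).hasFDerivAt
  have hφgrad : ∇ φ = fun z => ∇ f z - c := gradient_eq hφ
  have hφconv : ConvexOn ℝ univ φ :=
    hconv.sub ((innerₛₗ ℝ c).concaveOn convex_univ)
  have hmin : ∀ z, φ v ≤ φ z := fun z => by
    simpa [hφgrad, c] using hφconv.add_inner_gradient_le_s16 (fun z => (hφ z).differentiableAt) v z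
  have h := sq_norm_gradient_le (fun z => (hφ z).differentiableAt) hL
    (fun a b => by simpa [hφgrad] using hs a b) hmin u
  simp only [hφgrad, φ, Pi.sub_apply] at h
  rw [inner_sub_right]
  linarith

end Gradient

section Average

variable {E : Type*} [NormedAddCommGroup E] [InnerProductSpace ℝ E] {ι : Type*} [Fintype ι]

theorem sum_norm_sub_mean_sq_le (H : ι → E) :
    ∑ i, ‖H i - (Fintype.card ι : ℝ)⁻¹ • ∑ j, H j‖ ^ 2 ≤ ∑ i, ‖H i‖ ^ 2 := by
  set m : ℝ := (Fintype.card ι : ℝ)⁻¹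
  set S := ∑ j, H j
  have hsum : ∑ i, ‖H i - m • S‖ ^ 2 = ∑ i, ‖H i‖ ^ 2 - m * ‖S‖ ^ 2 := by
    simp only [norm_sub_sq_real, Finset.sum_add_distrib, Finset.sum_sub_distrib,
      ← Finset.mul_sum, ← sum_inner, Finset.sum_const, Finset.card_univ, nsmul_eq_mul,
      real_inner_smul_right, norm_smul, mul_pow, Real.norm_eq_abs, sq_abs]
    have hm : (Fintype.card ι : ℝ) * m ^ 2 = m := by
      rw [sq, ← mul_assoc, ← inv_inv (Fintype.card ι : ℝ)]
      exact inv_mul_mul_self m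
    linear_combination (-2 * m) * real_inner_self_eq_norm_sq S + ‖S‖ ^ 2 * hm
  rw [hsum]
  have : 0 ≤ m * ‖S‖ ^ 2 := by positivity
  linarith

theorem sum_norm_sub_sub_mean_sq_le (G H : ι → E) :
    ∑ i, ‖G i - (H i - (Fintype.card ι : ℝ)⁻¹ • ∑ j, H j)‖ ^ 2
      ≤ 2 * ∑ i, ‖G i‖ ^ 2 + 2 * ∑ i, ‖H i‖ ^ 2 := by
  set K := fun i => H i - (Fintype.card ι : ℝ)⁻¹ • ∑ j, H j
  have hpt : ∀ i, ‖G i - K i‖ ^ 2 ≤ 2 * ‖G i‖ ^ 2 + 2 * ‖K i‖ ^ 2 := fun i => by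
    nlinarith [parallelogram_law_with_norm ℝ (G i) (K i), sq_nonneg ‖G i + K i‖]
  calc ∑ i, ‖G i - K i‖ ^ 2
      ≤ ∑ i, (2 * ‖G i‖ ^ 2 + 2 * ‖K i‖ ^ 2) := Finset.sum_le_sum fun i _ => hpt i
    _ = 2 * ∑ i, ‖G i‖ ^ 2 + 2 * ∑ i, ‖K i‖ ^ 2 := by
      rw [Finset.sum_add_distrib, Finset.mul_sum, Finset.mul_sum]
    _ ≤ 2 * ∑ i, ‖G i‖ ^ 2 + 2 * ∑ i, ‖H i‖ ^ 2 := by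
      linarith [sum_norm_sub_mean_sq_le H]

end Average

theorem mul_sum_bregDiv {ι : Type*} [Fintype ι] {d : ℕ} (f : ι → EuclideanSpace ℝ (Fin d) → ℝ)
    (c : ℝ) (z w : EuclideanSpace ℝ (Fin d)) :
    c * ∑ i, bregDiv (f i) z w
      = c * ∑ i, f i z - c * ∑ i, f i w - ⟪c • ∑ i, ∇ (f i) w, z - w⟫ := by
  simp only [bregDiv, Finset.sum_sub_distrib, real_inner_smul_left, sum_inner]
  ring

theorem stmt_16_general (n d : ℕ) (hn : 1 ≤ n) (L : ℝ) (hL : 0 < L)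
    (f : Fin n → EuclideanSpace ℝ (Fin d) → ℝ)
    (hconv : ∀ i, ConvexOn ℝ Set.univ (f i))
    (hdiff : ∀ i, Differentiable ℝ (f i))
    (hsmooth : ∀ i x y, ‖gradient (f i) x - gradient (f i) y‖ ≤ L * ‖x - y‖)
    (F : EuclideanSpace ℝ (Fin d) → ℝ)
    (hF : F = fun x => (n : ℝ)⁻¹ * ∑ i, f i x)
    (xstar : EuclideanSpace ℝ (Fin d)) (hmin : ∀ z, F xstar ≤ F z)
    (x : EuclideanSpace ℝ (Fin d)) (y : Fin n → EuclideanSpace ℝ (Fin d))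
    (gbar : EuclideanSpace ℝ (Fin d))
    (hgbar : gbar = (n : ℝ)⁻¹ • ∑ j, gradient (f j) (y j)) :
    (n : ℝ)⁻¹ * ∑ i, ‖gradient (f i) x - gradient (f i) (y i) + gbar‖ ^ 2
      ≤ 8 * L * (F x - F xstar)
        + 4 * L * (∑ i, bregDiv (f i) (y i) xstar
            - ((n : ℝ)⁻¹ * ∑ i, bregDiv (f i) x xstar
                + (((n : ℝ) - 1) / n) * ∑ i, bregDiv (f i) (y i) xstar)) := by
  have hstar : (n : ℝ)⁻¹ • ∑ i, ∇ (f i) xstar = 0 :=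
    IsLocalMin.hasGradientAt_eq_zero (f := F) (.of_forall hmin)
      (hF ▸ hasGradientAt_mul_sum hdiff _ _)
  have hgap : ∀ z, (n : ℝ)⁻¹ * ∑ i, bregDiv (f i) z xstar = F z - F xstar := fun z => by
    rw [mul_sum_bregDiv, hstar, inner_zero_left, sub_zero, hF]
  have hcoco : ∀ i u, ‖∇ (f i) u - ∇ (f i) xstar‖ ^ 2 ≤ 2 * L * bregDiv (f i) u xstar :=
    fun i u => sq_norm_gradient_sub_le (hconv i) (hdiff i) hL (hsmooth i) u xstar
  set G := fun i => ∇ (f i) x - ∇ (f i) xstar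
  set H := fun i => ∇ (f i) (y i) - ∇ (f i) xstar
  have hvec : ∀ i, ∇ (f i) x - ∇ (f i) (y i) + gbar
      = G i - (H i - (Fintype.card (Fin n) : ℝ)⁻¹ • ∑ j, H j) := fun i => by
    rw [Fintype.card_fin, Finset.sum_sub_distrib, smul_sub, hstar, sub_zero, hgbar]
    simp only [G, H]
    abel
  have hsum : ∑ i, ‖∇ (f i) x - ∇ (f i) (y i) + gbar‖ ^ 2
      ≤ 4 * L * ∑ i, bregDiv (f i) x xstar + 4 * L * ∑ i, bregDiv (f i) (y i) xstar := by
    simp only [hvec]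
    have hG := Finset.sum_le_sum fun i (_ : i ∈ Finset.univ) => hcoco i x
    have hH := Finset.sum_le_sum fun i (_ : i ∈ Finset.univ) => hcoco i (y i)
    rw [← Finset.mul_sum] at hG hH
    linarith [sum_norm_sub_sub_mean_sq_le G H]
  have hfrac : ((n : ℝ) - 1) / n = 1 - (n : ℝ)⁻¹ := by
    field_simp [show (n : ℝ) ≠ 0 from Nat.cast_ne_zero.mpr (by omega)]
  rw [← hgap x, hfrac]
  have hn_inv : (0 : ℝ) ≤ (n : ℝ)⁻¹ := by positivity
  linarith [mul_le_mul_of_nonneg_left hsum hn_inv]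

theorem stmt_16 (n d : ℕ) (hn : 1 ≤ n) (hd : 1 ≤ d) (L : ℝ) (hL : 0 < L)
    (f : Fin n → EuclideanSpace ℝ (Fin d) → ℝ)
    (hconv : ∀ i, ConvexOn ℝ Set.univ (f i))
    (hdiff : ∀ i, Differentiable ℝ (f i))
    (hsmooth : ∀ i x y, ‖gradient (f i) x - gradient (f i) y‖ ≤ L * ‖x - y‖)
    (F : EuclideanSpace ℝ (Fin d) → ℝ)
    (hF : F = fun x => (n : ℝ)⁻¹ * ∑ i, f i x)
    (xstar : EuclideanSpace ℝ (Fin d)) (hmin : ∀ z, F xstar ≤ F z)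
    (x : EuclideanSpace ℝ (Fin d)) (y : Fin n → EuclideanSpace ℝ (Fin d))
    (gbar : EuclideanSpace ℝ (Fin d))
    (hgbar : gbar = (n : ℝ)⁻¹ • ∑ j, gradient (f j) (y j)) :
    (n : ℝ)⁻¹ * ∑ i, ‖gradient (f i) x - gradient (f i) (y i) + gbar‖ ^ 2
      ≤ 8 * L * (F x - F xstar)
        + 4 * L * (∑ i, bregDiv (f i) (y i) xstar
            - ((n : ℝ)⁻¹ * ∑ i, bregDiv (f i) x xstar
                + (((n : ℝ) - 1) / n) * ∑ i, bregDiv (f i) (y i) xstar)) :=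
  stmt_16_general n d hn L hL f hconv hdiff hsmooth F hF xstar hmin x y gbar hgbar
end
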